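/- Let α_1,…,α_n > 0 and β_1 ≥ β_2 ≥ … ≥ β_n > 0 with β_1/α_1 ≤ β_2/α_2 ≤ … ≤ β_n/α_n. Define a_i = α_i/∑_{j=1}^n α_j and b_i = β_i/∑_{j=1}^n β_j. Then the sequence (b_1,…,b_n) is majorized by (a_1,…,a_n), i.e., both are decreasing-rearrangement comparable: ∑_{i=1}^k b_i ≤ ∑_{i=1}^k a_i for all 1 ≤ k ≤ n−1 (after sorting each in decreasing order) and the total sums are equal (both equal 1). -/

import Mathlib

/-!
The normalized weights of an initial segment `t` satisfy `∑_t b ≤ ∑_t a`: since `β/α` increases,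
every cross term `β i α j` with `i ∈ t`, `j ∉ t` is at most `α i β j`, which is the inequality
after clearing denominators. As `b` is decreasing, an initial segment also carries the largest
`b`-sum among index sets of its size, so it is the witness for every `s`.
-/

open Finset

namespace Finset

variable {ι M : Type*} [AddCommMonoid M] [PartialOrder M] [IsOrderedAddMonoid M]

theorem sum_le_sum_of_card_eq_of_le_of_ge {s t : Finset ι} {f : ι → M} (c : M)
    (hs : ∀ i ∈ s, f i ≤ c) (ht : ∀ i ∈ t, c ≤ f i) (hcard : #s = #t) :
    ∑ i ∈ s, f i ≤ ∑ i ∈ t, f i :=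
  calc ∑ i ∈ s, f i ≤ #s • c := sum_le_card_nsmul s f c hs
    _ = #t • c := by rw [hcard]
    _ ≤ ∑ i ∈ t, f i := card_nsmul_le_sum t f c ht

end Finset

section LinearOrder

variable {ι : Type*} [LinearOrder ι]

theorem IsLowerSet.le_of_mem_of_notMem {t : Finset ι} (ht : IsLowerSet (t : Set ι))
    {i j : ι} (hi : i ∈ t) (hj : j ∉ t) : i ≤ j :=
  le_of_not_ge fun hji => hj (ht hji hi)

theorem Antitone.sum_le_sum_of_isLowerSet {M : Type*} [AddCommMonoid M] [PartialOrder M]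
    [IsOrderedAddMonoid M] {f : ι → M} (hf : Antitone f) {s t : Finset ι}
    (ht : IsLowerSet (t : Set ι)) (hcard : #s = #t) :
    ∑ i ∈ s, f i ≤ ∑ i ∈ t, f i := by
  classical
  rw [← sum_inter_add_sum_sdiff s t, ← sum_inter_add_sum_sdiff t s, inter_comm]
  refine add_le_add_right ?_ _
  have hcard' := card_sdiff_comm hcard
  rcases (s \ t).eq_empty_or_nonempty with hst | hst
  · have hts : t \ s = ∅ := card_eq_zero.mp (by rw [← hcard', hst, card_empty])
    simp only [hst, hts, sum_empty, le_refl]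
  · -- the least index of `s \ t` lies above all of `t`, so its value separates the two sums
    have hmin := mem_sdiff.mp ((s \ t).min'_mem hst)
    refine sum_le_sum_of_card_eq_of_le_of_ge (f ((s \ t).min' hst))
      (fun j hj => hf ((s \ t).min'_le j hj)) (fun i hi => hf ?_) hcard'
    exact ht.le_of_mem_of_notMem (mem_sdiff.mp hi).1 hmin.2

variable [Fintype ι] {α β : ι → ℝ}

theorem IsLowerSet.sum_mul_sum_compl_le (hα : ∀ i, 0 < α i)
    (hratio : Monotone fun i => β i / α i) {t : Finset ι} (ht : IsLowerSet (t : Set ι)) :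
    (∑ i ∈ t, β i) * ∑ j ∈ tᶜ, α j ≤ (∑ i ∈ t, α i) * ∑ j ∈ tᶜ, β j := by
  simp_rw [sum_mul_sum]
  refine sum_le_sum fun i hi => sum_le_sum fun j hj => ?_
  have hij := hratio (ht.le_of_mem_of_notMem hi (mem_compl.mp hj))
  rw [div_le_div_iff₀ (hα i) (hα j)] at hij
  linarith

theorem IsLowerSet.sum_div_sum_le [Nonempty ι] (hα : ∀ i, 0 < α i) (hβ : ∀ i, 0 < β i)
    (hratio : Monotone fun i => β i / α i) {t : Finset ι} (ht : IsLowerSet (t : Set ι)) :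
    ∑ i ∈ t, β i / ∑ j, β j ≤ ∑ i ∈ t, α i / ∑ j, α j := by
  classical
  have hcross := ht.sum_mul_sum_compl_le hα hratio
  rw [← sum_div, ← sum_div, div_le_div_iff₀ (sum_pos (fun i _ => hβ i) univ_nonempty)
    (sum_pos (fun i _ => hα i) univ_nonempty), ← sum_add_sum_compl t α,
    ← sum_add_sum_compl t β]
  linear_combination hcross

end LinearOrder

theorem Fin.isLowerSet_filter_val_lt {n : ℕ} (k : ℕ) :
    IsLowerSet (({i | (i : ℕ) < k} : Finset (Fin n)) : Set (Fin n)) := by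
  intro i j hji hi
  simp only [coe_filter, mem_univ, true_and, Set.mem_ofPred_eq] at hi ⊢
  exact lt_of_le_of_lt hji hi

/-- Majorization is encoded without sorting: every `b`-sum over an index set is bounded by an
`a`-sum over an index set of the same size (equivalently, the `k` largest entries of `b` sum to at
most the `k` largest of `a`), and the totals agree. -/
theorem marshall_olkin_majorization (n : ℕ) (hn : 1 ≤ n) (α β : Fin n → ℝ)
    (hα : ∀ i, 0 < α i) (hβpos : ∀ i, 0 < β i)
    (hβdec : ∀ i j : Fin n, i ≤ j → β j ≤ β i)
    (hratio : ∀ i j : Fin n, i ≤ j → β i / α i ≤ β j / α j)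
    (a b : Fin n → ℝ)
    (ha : ∀ i, a i = α i / ∑ j, α j) (hb : ∀ i, b i = β i / ∑ j, β j) :
    (∀ s : Finset (Fin n), ∃ t : Finset (Fin n), t.card = s.card ∧
        ∑ i ∈ s, b i ≤ ∑ i ∈ t, a i) ∧
    ∑ i, b i = ∑ i, a i := by
  obtain rfl : a = fun i => α i / ∑ j, α j := funext ha
  obtain rfl : b = fun i => β i / ∑ j, β j := funext hb
  have : Nonempty (Fin n) := ⟨⟨0, hn⟩⟩
  have hSα : 0 < ∑ j, α j := sum_pos (fun i _ => hα i) univ_nonempty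
  have hSβ : 0 < ∑ j, β j := sum_pos (fun i _ => hβpos i) univ_nonempty
  refine ⟨fun s => ?_, ?_⟩
  · set t : Finset (Fin n) := {i | (i : ℕ) < #s}
    have ht : IsLowerSet (t : Set (Fin n)) := Fin.isLowerSet_filter_val_lt #s
    have hcard : #t = #s := by
      rw [Fin.card_filter_val_lt, min_eq_right ((card_le_univ s).trans_eq (Fintype.card_fin n))]
    have hb_anti := (monotone_div_right_of_nonneg hSβ.le).comp_antitone hβdec
    refine ⟨t, hcard, ?_⟩
    calc ∑ i ∈ s, β i / ∑ j, β j ≤ ∑ i ∈ t, β i / ∑ j, β j :=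
          hb_anti.sum_le_sum_of_isLowerSet ht hcard.symm
      _ ≤ ∑ i ∈ t, α i / ∑ j, α j := ht.sum_div_sum_le hα hβpos hratio
  · rw [← sum_div, ← sum_div, div_self hSβ.ne', div_self hSα.ne']
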